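/- arXiv:2012.07409 — 4 statements merged into one kernel-verified Lean document; each statement's English description precedes it below -/
import Mathlib

section
/- Let p(z) = 1 + a z^k with a ≠ 0 and k ≥ 1. Then the maximum modulus set of p, minus the origin, is the union over j ∈ {0,…,k−1} of the open rays {z ∈ ℂ \ {0} : arg z ≡ (2jπ − arg a)/k mod 2π}, and in particular it has exactly k connected components intersected with any punctured disc around 0. -/
/-!
On the circle `‖z‖ = r` we have `‖1 + a z^k‖ ≤ 1 + ‖a‖ r^k`, with equality exactly when `a z^k` is
a nonnegative real, i.e. when `arg a + k arg z ≡ 0 (mod 2π)`; such points exist on every circle,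
so `M(p) \ {0}` is the union of the `k` open rays with directions `(2jπ - arg a)/k`. In a
punctured disc these rays become `k` radial segments. The argument, viewed as an angle, is
continuous on their union and takes finitely many values, so it is constant on each connected
component; its fibres are the segments themselves, which are connected.
-/

def maxModSet (h : ℂ → ℂ) : Set ℂ :=
  {z : ℂ | ∀ w : ℂ, ‖w‖ = ‖z‖ → ‖h w‖ ≤ ‖h z‖}

open Complex Set Real

section Components

variable {X Y : Type*} [TopologicalSpace X] [TopologicalSpace Y] [T1Space Y] {S : Set X}
  {f : X → Y}

theorem connectedComponentIn_eq_inter_preimage (hf : ContinuousOn f S) (hfin : (f '' S).Finite)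
    (hfib : ∀ y, IsPreconnected (S ∩ f ⁻¹' {y})) {x : X} (hx : x ∈ S) :
    connectedComponentIn S x = S ∩ f ⁻¹' {f x} := by
  refine Subset.antisymm (fun w hw => ⟨connectedComponentIn_subset S x hw, ?_⟩)
    ((hfib (f x)).subset_connectedComponentIn ⟨hx, rfl⟩ inter_subset_left)
  have hC : IsPreconnected (f '' connectedComponentIn S x) :=
    isPreconnected_connectedComponentIn.image f (hf.mono (connectedComponentIn_subset S x))
  have hsub : (f '' connectedComponentIn S x).Subsingleton :=
    not_nontrivial_iff.mp fun hnt => hC.infinite_of_nontrivial hnt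
      (hfin.subset (image_mono (connectedComponentIn_subset S x)))
  exact hsub (mem_image_of_mem f hw) (mem_image_of_mem f (mem_connectedComponentIn hx))

theorem ncard_connectedComponentIn_eq_ncard_image (hf : ContinuousOn f S)
    (hfin : (f '' S).Finite) (hfib : ∀ y, IsPreconnected (S ∩ f ⁻¹' {y})) :
    {s | ∃ x ∈ S, s = connectedComponentIn S x}.ncard = (f '' S).ncard := by
  have hcomp : {s | ∃ x ∈ S, s = connectedComponentIn S x} =
      (fun y => S ∩ f ⁻¹' {y}) '' (f '' S) := by
    ext s
    simp only [mem_ofPred_eq, mem_image, exists_exists_and_eq_and]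
    refine exists_congr fun x => and_congr_right fun hx => ?_
    rw [connectedComponentIn_eq_inter_preimage hf hfin hfib hx, eq_comm]
  rw [hcomp, InjOn.ncard_image]
  rintro _ ⟨x, hx, rfl⟩ _ ⟨x', hx', rfl⟩ h
  exact (h.subset ⟨hx, rfl⟩).2

end Components

section RadialSegments

def radialSegments (R : ℝ) (A : Set Angle) : Set ℂ :=
  {z : ℂ | 0 < ‖z‖ ∧ ‖z‖ < R ∧ (arg z : Angle) ∈ A}

lemma mem_radialSegments {R : ℝ} {A : Set Angle} {z : ℂ} :
    z ∈ radialSegments R A ↔ 0 < ‖z‖ ∧ ‖z‖ < R ∧ (arg z : Angle) ∈ A :=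
  Iff.rfl

lemma norm_ofReal_mul_toCircle {t : ℝ} (ht : 0 ≤ t) (ψ : Angle) :
    ‖(t : ℂ) * ψ.toCircle‖ = t := by
  rw [norm_mul, Circle.norm_coe, mul_one, norm_real, norm_of_nonneg ht]

lemma arg_ofReal_mul_toCircle {t : ℝ} (ht : 0 < t) (ψ : Angle) :
    (arg ((t : ℂ) * ψ.toCircle) : Angle) = ψ := by
  rw [arg_real_mul _ ht, Angle.arg_toCircle]

lemma image_ofReal_mul_toCircle_Ioo (ψ : Angle) (R : ℝ) :
    (fun t : ℝ => (t : ℂ) * ψ.toCircle) '' Ioo 0 R = radialSegments R {ψ} := by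
  ext z
  rw [mem_radialSegments, mem_singleton_iff]
  constructor
  · rintro ⟨t, ⟨ht, htR⟩, rfl⟩
    rw [norm_ofReal_mul_toCircle ht.le, arg_ofReal_mul_toCircle ht]
    exact ⟨ht, htR, rfl⟩
  · rintro ⟨hz, hzR, rfl⟩
    refine ⟨‖z‖, ⟨hz, hzR⟩, ?_⟩
    rw [Angle.toCircle_coe, Circle.coe_exp]
    exact norm_mul_exp_arg_mul_I z

variable {R : ℝ} {A : Set Angle}

lemma continuousOn_arg_radialSegments :
    ContinuousOn (fun z : ℂ => (arg z : Angle)) (radialSegments R A) :=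
  fun _ hz => (continuousAt_arg_coe_angle (norm_pos_iff.mp hz.1)).continuousWithinAt

lemma image_arg_radialSegments (hR : 0 < R) :
    (fun z : ℂ => (arg z : Angle)) '' radialSegments R A = A := by
  refine Subset.antisymm (by rintro _ ⟨z, hz, rfl⟩; exact hz.2.2) fun ψ hψ => ?_
  have hR2 : 0 < R / 2 := half_pos hR
  refine ⟨(R / 2 : ℝ) * ψ.toCircle, ?_, arg_ofReal_mul_toCircle hR2 ψ⟩
  rw [mem_radialSegments, norm_ofReal_mul_toCircle hR2.le, arg_ofReal_mul_toCircle hR2]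
  exact ⟨hR2, half_lt_self hR, hψ⟩

lemma isPreconnected_radialSegments_inter_preimage (ψ : Angle) :
    IsPreconnected (radialSegments R A ∩ (fun z : ℂ => (arg z : Angle)) ⁻¹' {ψ}) := by
  by_cases hψ : ψ ∈ A
  · have hfiber : radialSegments R A ∩ (fun z : ℂ => (arg z : Angle)) ⁻¹' {ψ} =
        radialSegments R {ψ} := by
      ext z
      simp only [mem_inter_iff, mem_radialSegments, mem_preimage, mem_singleton_iff]
      exact ⟨fun ⟨⟨h0, hR, _⟩, hz⟩ => ⟨h0, hR, hz⟩, fun ⟨h0, hR, hz⟩ => ⟨⟨h0, hR, hz ▸ hψ⟩, hz⟩⟩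
    rw [hfiber, ← image_ofReal_mul_toCircle_Ioo]
    exact isPreconnected_Ioo.image _ (by fun_prop : Continuous fun t : ℝ =>
      (t : ℂ) * ψ.toCircle).continuousOn
  · convert isPreconnected_empty
    exact eq_empty_of_forall_notMem fun z ⟨⟨_, _, hz⟩, hzψ⟩ => hψ (hzψ ▸ hz)

theorem ncard_connectedComponentIn_radialSegments (hR : 0 < R) (hA : A.Finite) :
    {s | ∃ z ∈ radialSegments R A, s = connectedComponentIn (radialSegments R A) z}.ncard =
      A.ncard := by
  rw [ncard_connectedComponentIn_eq_ncard_image continuousOn_arg_radialSegments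
      ((image_arg_radialSegments hR).symm ▸ hA) isPreconnected_radialSegments_inter_preimage,
    image_arg_radialSegments hR]

end RadialSegments

noncomputable def rayAngle (a : ℂ) (k j : ℕ) : Angle := ((2 * j * π - arg a) / k : ℝ)

lemma rayAngle_injOn (a : ℂ) (k : ℕ) : InjOn (rayAngle a k) (Iio k) := by
  intro j hj j' hj' h
  obtain ⟨m, hm⟩ := Angle.angle_eq_iff_two_pi_dvd_sub.mp h
  have hk : (k : ℝ) ≠ 0 := Nat.cast_ne_zero.mpr (by grind)
  have hdvd : (k : ℤ) ∣ (j : ℤ) - j' := by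
    refine ⟨m, ?_⟩
    have : ((j : ℤ) - j' : ℝ) = (k * m : ℤ) := by
      push_cast
      field_simp at hm
      nlinarith [pi_pos]
    exact_mod_cast this
  have := Int.eq_zero_of_abs_lt_dvd hdvd (by rw [abs_lt]; grind)
  omega

lemma arg_mul_pow_eq_zero_iff {a z : ℂ} {k : ℕ} (ha : a ≠ 0) (hz : z ≠ 0) (hk : k ≠ 0) :
    arg (a * z ^ k) = 0 ↔ ∃ j < k, (arg z : Angle) = rayAngle a k j := by
  have hroot : -(arg a : Angle) = k • ((-arg a / k : ℝ) : Angle) := by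
    rw [← Angle.coe_nsmul, ← Angle.coe_neg, nsmul_eq_mul]
    field_simp
  rw [← arg_one, ← arg_coe_angle_eq_iff, arg_mul_coe_angle ha (pow_ne_zero k hz),
    arg_pow_coe_angle, arg_one, Angle.coe_zero, add_eq_zero_iff_neg_eq, eq_comm, hroot,
    Angle.nsmul_eq_iff hk, Fin.exists_iff]
  simp only [exists_prop]
  refine exists_congr fun j => and_congr_right fun _ => ?_
  rw [rayAngle, ← Angle.coe_nsmul, ← Angle.coe_add, nsmul_eq_mul]
  field_simp
  rw [neg_add_eq_sub]

lemma norm_one_add_eq_iff_arg_eq_zero {w : ℂ} : ‖1 + w‖ = 1 + ‖w‖ ↔ w = 0 ∨ arg w = 0 := by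
  rw [← norm_one (α := ℂ), norm_add_eq_iff, arg_one, eq_comm (a := (0 : ℝ))]
  simp

lemma exists_norm_eq_norm_one_add_mul_pow_eq (a : ℂ) {k : ℕ} (hk : k ≠ 0) {r : ℝ} (hr : 0 ≤ r) :
    ∃ w : ℂ, ‖w‖ = r ∧ ‖1 + a * w ^ k‖ = 1 + ‖a‖ * r ^ k := by
  set w : ℂ := r * (rayAngle a k 0).toCircle
  have hw : ‖w‖ = r := norm_ofReal_mul_toCircle hr _
  refine ⟨w, hw, ?_⟩
  rw [← hw, ← norm_pow, ← norm_mul, norm_one_add_eq_iff_arg_eq_zero]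
  refine or_iff_not_imp_left.mpr fun h => ?_
  obtain ⟨ha, hw0⟩ : a ≠ 0 ∧ w ≠ 0 := by simpa [hk] using h
  have hr0 : 0 < r := hw ▸ norm_pos_iff.mpr hw0
  exact (arg_mul_pow_eq_zero_iff ha hw0 hk).mpr
    ⟨0, Nat.pos_of_ne_zero hk, arg_ofReal_mul_toCircle hr0 _⟩

lemma mem_maxModSet_one_add_mul_pow_iff {a z : ℂ} {k : ℕ} (hk : k ≠ 0) :
    z ∈ maxModSet (fun z => 1 + a * z ^ k) ↔ ‖1 + a * z ^ k‖ = 1 + ‖a * z ^ k‖ := by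
  have hle : ∀ w : ℂ, ‖1 + a * w ^ k‖ ≤ 1 + ‖a‖ * ‖w‖ ^ k := fun w => by
    simpa only [norm_one, norm_mul, norm_pow] using norm_add_le (1 : ℂ) (a * w ^ k)
  rw [norm_mul, norm_pow]
  constructor
  · intro hz
    obtain ⟨w, hw, hmax⟩ := exists_norm_eq_norm_one_add_mul_pow_eq a hk (norm_nonneg z)
    exact le_antisymm (hle z) (hmax ▸ hz w hw)
  · intro hz w hw
    simpa only [hz, hw] using hle w

lemma mem_maxModSet_one_add_mul_pow_iff_arg {a z : ℂ} {k : ℕ} (ha : a ≠ 0) (hk : k ≠ 0)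
    (hz : z ≠ 0) :
    z ∈ maxModSet (fun z => 1 + a * z ^ k) ↔ ∃ j < k, (arg z : Angle) = rayAngle a k j := by
  rw [mem_maxModSet_one_add_mul_pow_iff hk, norm_one_add_eq_iff_arg_eq_zero,
    or_iff_right (mul_ne_zero ha (pow_ne_zero k hz)), arg_mul_pow_eq_zero_iff ha hz hk]

lemma maxModSet_one_add_mul_pow_diff_zero {a : ℂ} {k : ℕ} (ha : a ≠ 0) (hk : k ≠ 0) :
    maxModSet (fun z => 1 + a * z ^ k) \ {0} =
      {z : ℂ | z ≠ 0 ∧ ∃ j < k, (arg z : Angle) = rayAngle a k j} := by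
  ext z
  rw [mem_sdiff, mem_singleton_iff, mem_ofPred_eq, and_comm]
  exact and_congr_right (mem_maxModSet_one_add_mul_pow_iff_arg ha hk)

theorem stmt4 (a : ℂ) (ha : a ≠ 0) (k : ℕ) (hk : 1 ≤ k) (p : ℂ → ℂ)
    (hp : ∀ z : ℂ, p z = 1 + a * z ^ k) :
    (maxModSet p \ {0} =
      ⋃ j ∈ Finset.range k, {z : ℂ | z ≠ 0 ∧
        ∃ m : ℤ, Complex.arg z = (2 * j * Real.pi - Complex.arg a) / k + 2 * Real.pi * m}) ∧
    ∀ R : ℝ, 0 < R →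
      Set.ncard {s : Set ℂ | ∃ z ∈ (maxModSet p \ {0}) ∩ {w : ℂ | 0 < ‖w‖ ∧ ‖w‖ < R},
        s = connectedComponentIn ((maxModSet p \ {0}) ∩ {w : ℂ | 0 < ‖w‖ ∧ ‖w‖ < R}) z} = k := by
  obtain rfl : p = fun z => 1 + a * z ^ k := funext hp
  rw [maxModSet_one_add_mul_pow_diff_zero ha (by omega)]
  constructor
  · ext z
    simp only [rayAngle, Angle.angle_eq_iff_two_pi_dvd_sub, sub_eq_iff_eq_add', mem_ofPred_eq,
      mem_iUnion, Finset.mem_range, exists_prop]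
    exact ⟨fun ⟨hz, j, hj, h⟩ => ⟨j, hj, hz, h⟩, fun ⟨j, hj, hz, h⟩ => ⟨hz, j, hj, h⟩⟩
  · intro R hR
    have hsegments : {z : ℂ | z ≠ 0 ∧ ∃ j < k, (arg z : Angle) = rayAngle a k j} ∩
        {w : ℂ | 0 < ‖w‖ ∧ ‖w‖ < R} = radialSegments R (rayAngle a k '' Iio k) := by
      ext z
      simp only [mem_inter_iff, mem_ofPred_eq, mem_radialSegments, mem_image, mem_Iio,
        norm_pos_iff, eq_comm]
      tauto
    rw [hsegments, ncard_connectedComponentIn_radialSegments hR ((finite_Iio k).image _),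
      (rayAngle_injOn a k).ncard_image, ncard_Iio_nat]
end

section
/- Let q(z) = 1 + z² + b z³ with Re(b) > 0. Then there exists r₀ > 0 and δ > 0 such that for all 0 < r ≤ r₀ and all θ with |θ| ≤ δ and θ ≠ 0 or θ = 0, one has |q(r e^{iθ})| > |q(r e^{i(π−θ)})|; that is, near the origin the maximum modulus of q on small circles is attained near the positive real axis rather than near the negative real axis. -/
/-!
The point `r e^{i(π-θ)}` is `-conj z` for `z = r e^{iθ}`, and
`q (-conj z) = conj (1 + z² - conj b · z³)`. With `A = 1 + z²` this gives
`|q z|² - |q (-conj z)|² = |A + b z³|² - |A - conj b · z³|² = 4 Re b · Re (conj A · z³)`,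
and `Re (conj A · z³) = r³ cos 3θ + r⁵ cos θ` is positive for every `r > 0` once `|θ| ≤ π/6`.
-/

open Complex ComplexConjugate

lemma normSq_add_mul_sub_normSq_sub_conj_mul (A b v : ℂ) :
    normSq (A + b * v) - normSq (A - conj b * v) = 4 * b.re * (conj A * v).re := by
  simp only [normSq_apply, sub_re, sub_im, add_re, add_im, mul_re, mul_im, conj_re, conj_im]
  ring

lemma norm_one_add_sq_add_mul_cube_neg_conj (b z : ℂ) :
    ‖1 + (-conj z) ^ 2 + b * (-conj z) ^ 3‖ = ‖1 + z ^ 2 - conj b * z ^ 3‖ := by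
  have h : 1 + (-conj z) ^ 2 + b * (-conj z) ^ 3 = conj (1 + z ^ 2 - conj b * z ^ 3) := by
    simp only [map_add, map_sub, map_mul, map_pow, map_one, conj_conj]
    ring
  rw [h, norm_conj]

lemma norm_one_add_sq_add_mul_cube_neg_conj_lt {b z : ℂ} (hb : 0 < b.re)
    (hz : 0 < (conj (1 + z ^ 2) * z ^ 3).re) :
    ‖1 + (-conj z) ^ 2 + b * (-conj z) ^ 3‖ < ‖1 + z ^ 2 + b * z ^ 3‖ := by
  rw [norm_one_add_sq_add_mul_cube_neg_conj, norm_def, norm_def]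
  apply Real.sqrt_lt_sqrt (normSq_nonneg _)
  have := normSq_add_mul_sub_normSq_sub_conj_mul (1 + z ^ 2) b (z ^ 3)
  nlinarith [mul_pos hb hz]

lemma re_conj_one_add_sq_mul_cube (z : ℂ) :
    (conj (1 + z ^ 2) * z ^ 3).re = (z ^ 3).re + ‖z‖ ^ 4 * z.re := by
  have h : conj (1 + z ^ 2) * z ^ 3 = z ^ 3 + ((‖z‖ ^ 4 : ℝ) : ℂ) * z := by
    have : ((‖z‖ ^ 4 : ℝ) : ℂ) = (conj z * z) ^ 2 := by
      rw [conj_mul', ← ofReal_pow, ← ofReal_pow]; ring_nf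
    rw [this, map_add, map_one, map_pow]
    ring
  rw [h, add_re, re_ofReal_mul]

lemma ofReal_mul_exp_pi_sub_mul_I (r θ : ℝ) :
    (r : ℂ) * exp ((Real.pi - θ) * I) = -conj ((r : ℂ) * exp (θ * I)) := by
  rw [map_mul, conj_ofReal, ← exp_conj, map_mul, conj_ofReal, conj_I, sub_mul, exp_sub,
    exp_pi_mul_I, mul_neg, exp_neg]
  ring

lemma re_pow_ofReal_mul_exp_mul_I (r θ : ℝ) (n : ℕ) :
    (((r : ℂ) * exp (θ * I)) ^ n).re = r ^ n * Real.cos (n * θ) := by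
  rw [mul_pow, ← exp_nat_mul, ← mul_assoc, ← ofReal_pow, ← ofReal_natCast, ← ofReal_mul,
    re_ofReal_mul, exp_ofReal_mul_I_re]

lemma re_conj_one_add_sq_mul_cube_pos {r θ : ℝ} (hr : 0 < r) (hθ : |θ| ≤ Real.pi / 6) :
    0 < (conj (1 + ((r : ℂ) * exp (θ * I)) ^ 2) * ((r : ℂ) * exp (θ * I)) ^ 3).re := by
  obtain ⟨hθl, hθu⟩ := abs_le.mp hθ
  have hπ := Real.pi_pos
  have hcos : 0 < Real.cos θ := Real.cos_pos_of_mem_Ioo ⟨by linarith, by linarith⟩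
  have hcos3 : 0 ≤ Real.cos (3 * θ) := Real.cos_nonneg_of_mem_Icc ⟨by linarith, by linarith⟩
  rw [re_conj_one_add_sq_mul_cube, norm_mul, norm_real, norm_exp_ofReal_mul_I, mul_one,
    Real.norm_of_nonneg hr.le, re_pow_ofReal_mul_exp_mul_I, ← pow_one ((r : ℂ) * _),
    re_pow_ofReal_mul_exp_mul_I]
  push_cast
  rw [one_mul, pow_one]
  positivity

theorem stmt10 (b : ℂ) (hb : 0 < b.re) (q : ℂ → ℂ)
    (hq : ∀ z : ℂ, q z = 1 + z ^ 2 + b * z ^ 3) :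
    ∃ r₀ > (0 : ℝ), ∃ δ > (0 : ℝ), ∀ r : ℝ, 0 < r → r ≤ r₀ → ∀ θ : ℝ, |θ| ≤ δ →
      ‖q (r * Complex.exp ((Real.pi - θ) * Complex.I))‖ <
        ‖q (r * Complex.exp (θ * Complex.I))‖ := by
  refine ⟨1, one_pos, Real.pi / 6, by positivity, fun r hr _ θ hθ => ?_⟩
  rw [ofReal_mul_exp_pi_sub_mul_I, hq, hq]
  exact norm_one_add_sq_add_mul_cube_neg_conj_lt hb (re_conj_one_add_sq_mul_cube_pos hr hθ)
end

section
/- Fix a ≠ 0, b ≠ 0, integers n > k ≥ 1, and define t_j = 2|b| cos(n ω_j + arg b) where ω_j = (2jπ − arg a)/k, for j, j' ∈ {0, …, k−1}. Then t_j = t_{j'} if and only if there exists an integer m such that either j' − j = m k / n, or (j' + j)π = (k/n)(mπ − arg b) + arg a. -/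
/-! Since `cos x = cos y` exactly when `y = 2mπ ± x`, equality of the `t_j` splits into a
condition on the difference of the two phases (giving `j' - j = mk/n`) and one on their sum
(giving the second alternative); both are linear equations once `n, k ≠ 0` are cleared. -/

open Real

section Phase

variable {n k : ℝ} (hn : n ≠ 0) (hk : k ≠ 0) (α β x y c : ℝ)
include hn hk

theorem phase_eq_two_mul_pi_add_phase_iff :
    n * ((2 * y * π - α) / k) + β = 2 * c * π + (n * ((2 * x * π - α) / k) + β) ↔
      y - x = c * k / n := by
  have hpi : 2 * π ≠ 0 := by positivity
  constructor
  · intro h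
    field_simp at h ⊢
    exact mul_right_cancel₀ hpi (by linear_combination h)
  · intro h
    field_simp at h ⊢
    linear_combination 2 * π * h

theorem phase_eq_two_mul_pi_sub_phase_iff :
    n * ((2 * y * π - α) / k) + β = 2 * c * π - (n * ((2 * x * π - α) / k) + β) ↔
      (y + x) * π = k / n * (c * π - β) + α := by
  constructor
  · intro h
    field_simp at h ⊢
    linear_combination h / 2
  · intro h
    field_simp at h ⊢
    linear_combination 2 * h

end Phase

theorem stmt14_general (a b : ℂ) (hb : b ≠ 0) (n k : ℕ) (hk : 1 ≤ k) (hnk : k < n)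
    (j j' : ℕ) :
    2 * ‖b‖ * Real.cos (n * ((2 * j * Real.pi - Complex.arg a) / k) + Complex.arg b) =
      2 * ‖b‖ * Real.cos (n * ((2 * j' * Real.pi - Complex.arg a) / k) + Complex.arg b) ↔
    ∃ m : ℤ, ((j' : ℝ) - j = m * k / n ∨
      ((j' : ℝ) + j) * Real.pi = (k / n) * (m * Real.pi - Complex.arg b) + Complex.arg a) := by
  have hb2 : (2 : ℝ) * ‖b‖ ≠ 0 := by simpa using hb
  have hk0 : (k : ℝ) ≠ 0 := Nat.cast_ne_zero.mpr (by omega)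
  have hn0 : (n : ℝ) ≠ 0 := Nat.cast_ne_zero.mpr (by omega)
  rw [mul_right_inj' hb2, cos_eq_cos_iff]
  refine exists_congr fun m => or_congr ?_ ?_
  · exact phase_eq_two_mul_pi_add_phase_iff hn0 hk0 _ _ _ _ _
  · exact phase_eq_two_mul_pi_sub_phase_iff hn0 hk0 _ _ _ _ _

theorem stmt14 (a b : ℂ) (ha : a ≠ 0) (hb : b ≠ 0) (n k : ℕ) (hk : 1 ≤ k) (hnk : k < n)
    (j j' : ℕ) (hj : j < k) (hj' : j' < k) :
    2 * ‖b‖ * Real.cos (n * ((2 * j * Real.pi - Complex.arg a) / k) + Complex.arg b) =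
      2 * ‖b‖ * Real.cos (n * ((2 * j' * Real.pi - Complex.arg a) / k) + Complex.arg b) ↔
    ∃ m : ℤ, ((j' : ℝ) - j = m * k / n ∨
      ((j' : ℝ) + j) * Real.pi = (k / n) * (m * Real.pi - Complex.arg b) + Complex.arg a) :=
  stmt14_general a b hb n k hk hnk j j'
end

section
/- Let μ_p and μ_{p̂} be positive integers with μ_p dividing μ_{p̂}, let k be a positive multiple of μ_{p̂} and n a positive multiple of μ_p such that μ_{p̂}/μ_p and n/μ_p are coprime. Suppose j, j' are integers with j' − j = B₀ k / μ_{p̂} for some integer B₀. Then there exists an integer m with j' − j = m k / n if and only if there exists an integer B₁ with j' − j = B₁ k / μ_p. -/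
/-! Write `μq = μp * b`, `n = μp * a` with `a`, `b` coprime, and `r = k / μp`. The hypothesis says
`b • (j' - j) ∈ ℤ r`, and `j' - j ∈ ℤ (r / a)` says `a • (j' - j) ∈ ℤ r`; a Bézout relation
`u * a + v * b = 1` then puts `j' - j` itself in `ℤ r`. -/

open AddSubgroup

theorem AddSubgroup.mem_of_zsmul_mem_of_isCoprime {G : Type*} [AddCommGroup G] {H : AddSubgroup G}
    {a b : ℤ} (hab : IsCoprime a b) {x : G} (ha : a • x ∈ H) (hb : b • x ∈ H) : x ∈ H := by
  obtain ⟨u, v, huv⟩ := hab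
  have hx : x = u • a • x + v • b • x := by
    rw [smul_smul, smul_smul, ← add_smul, huv, one_smul]
  rw [hx]
  exact add_mem (zsmul_mem ha u) (zsmul_mem hb v)

theorem mem_zmultiples_div_natCast_iff {K : Type*} [Field K] [CharZero K] {r x : K} {a : ℕ}
    (ha : a ≠ 0) : x ∈ zmultiples (r / a) ↔ (a : ℤ) • x ∈ zmultiples r := by
  have haK : (a : K) ≠ 0 := Nat.cast_ne_zero.mpr ha
  simp only [mem_zmultiples_iff, zsmul_eq_mul, Int.cast_natCast]
  refine exists_congr fun m ↦ ?_
  rw [mul_div_assoc', div_eq_iff haK, mul_comm x]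

theorem mem_zmultiples_div_iff_of_coprime {K : Type*} [Field K] [CharZero K] {r x : K} {a b : ℕ}
    (ha : a ≠ 0) (hb : b ≠ 0) (hab : Nat.Coprime a b) (hx : x ∈ zmultiples (r / b)) :
    x ∈ zmultiples (r / a) ↔ x ∈ zmultiples r := by
  rw [mem_zmultiples_div_natCast_iff ha]
  rw [mem_zmultiples_div_natCast_iff hb] at hx
  exact ⟨fun hxa ↦ mem_of_zsmul_mem_of_isCoprime (Nat.isCoprime_iff_coprime.mpr hab) hxa hx,
    fun hxr ↦ zsmul_mem hxr _⟩

theorem exists_eq_intCast_mul_div_iff {K : Type*} [Field K] (x c q : K) :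
    (∃ m : ℤ, x = m * c / q) ↔ x ∈ zmultiples (c / q) := by
  simp only [mem_zmultiples_iff, zsmul_eq_mul, mul_div_assoc, eq_comm]

theorem stmt15_general (μp μq k n : ℕ) (hμp : 0 < μp) (hμq : 0 < μq) (hn : 0 < n)
    (hdvd : μp ∣ μq) (hnp : μp ∣ n)
    (hcop : Nat.Coprime (μq / μp) (n / μp))
    (j j' : ℤ) (hB0 : ∃ B0 : ℤ, (j' : ℚ) - j = B0 * k / μq) :
    (∃ m : ℤ, (j' : ℚ) - j = m * k / n) ↔ (∃ B1 : ℤ, (j' : ℚ) - j = B1 * k / μp) := by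
  obtain ⟨b, rfl⟩ := hdvd
  obtain ⟨a, rfl⟩ := hnp
  rw [Nat.mul_div_cancel_left b hμp, Nat.mul_div_cancel_left a hμp] at hcop
  simp only [exists_eq_intCast_mul_div_iff] at hB0 ⊢
  rw [Nat.cast_mul, ← div_div] at hB0 ⊢
  exact mem_zmultiples_div_iff_of_coprime (Nat.pos_of_mul_pos_left hn).ne'
    (Nat.pos_of_mul_pos_left hμq).ne' hcop.symm hB0

theorem stmt15 (μp μq k n : ℕ) (hμp : 0 < μp) (hμq : 0 < μq) (hk : 0 < k) (hn : 0 < n)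
    (hdvd : μp ∣ μq) (hkq : μq ∣ k) (hnp : μp ∣ n)
    (hcop : Nat.Coprime (μq / μp) (n / μp))
    (j j' : ℤ) (hB0 : ∃ B0 : ℤ, (j' : ℚ) - j = B0 * k / μq) :
    (∃ m : ℤ, (j' : ℚ) - j = m * k / n) ↔ (∃ B1 : ℤ, (j' : ℚ) - j = B1 * k / μp) :=
  stmt15_general μp μq k n hμp hμq hn hdvd hnp hcop j j' hB0
end
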